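/- arXiv:2312.00229 — 6 statements merged into one kernel-verified Lean document; each statement's English description precedes it below -/
import Mathlib

section
/- On equidistant nodes, the cubic interpolating polynomial q on nodes {x_{i-1}, x_i, x_{i+1}, x_{i+2}} can be written on [x_i, x_{i+1}] as q(x) = C_0(x)·p_0(x) + C_1(x)·p_1(x), where p_0, p_1 are the quadratic interpolants on the stencils {x_{i-1}, x_i, x_{i+1}} and {x_i, x_{i+1}, x_{i+2}} respectively, the ideal weights are the affine functions C_0(x) = (x_{i+2} - x)/(3h) and C_1(x) = (x - x_{i-1})/(3h), and these satisfy C_0(x), C_1(x) ≥ 0 and C_0(x) + C_1(x) = 1 for all x in [x_i, x_{i+1}]. -/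
open Set Polynomial

theorem Polynomial.neville_aitken_of_natDegree_le {R : Type*} [CommRing R] [IsDomain R]
    {a b c d : R} (hab : a ≠ b) (hac : a ≠ c) (had : a ≠ d) (hbc : b ≠ c) (hbd : b ≠ d)
    (hcd : c ≠ d) {p₀ p₁ q : R[X]} (hp₀ : p₀.natDegree ≤ 2) (hp₁ : p₁.natDegree ≤ 2)
    (hq : q.natDegree ≤ 3) (hp₀a : p₀.eval a = q.eval a) (hp₀b : p₀.eval b = q.eval b)
    (hp₀c : p₀.eval c = q.eval c) (hp₁b : p₁.eval b = q.eval b) (hp₁c : p₁.eval c = q.eval c)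
    (hp₁d : p₁.eval d = q.eval d) :
    C (d - a) * q = (C d - X) * p₀ + (X - C a) * p₁ := by
  classical
  refine eq_of_natDegree_lt_card_of_eval_eq' _ _ {a, b, c, d} ?_ ?_
  · -- at the inner nodes `b, c` the weights `d - X` and `X - a` add up to `d - a`
    intro x hx
    simp only [Finset.mem_insert, Finset.mem_singleton] at hx
    rcases hx with rfl | rfl | rfl | rfl <;> simp [*] <;> ring
  · rw [Finset.card_eq_four.mpr ⟨a, b, c, d, hab, hac, had, hbc, hbd, hcd, rfl⟩]
    refine Nat.lt_succ_of_le (max_le ?_ ?_)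
    · exact (natDegree_C_mul_le _ _).trans hq
    · compute_degree
      omega

theorem stmt2 (xi h : ℝ) (hh : 0 < h) (vm1 v0 v1 v2 : ℝ)
    (p0 p1 q : Polynomial ℝ)
    (hp0deg : p0.natDegree ≤ 2)
    (hp0m : p0.eval (xi - h) = vm1) (hp00 : p0.eval xi = v0)
    (hp01 : p0.eval (xi + h) = v1)
    (hp1deg : p1.natDegree ≤ 2)
    (hp10 : p1.eval xi = v0) (hp11 : p1.eval (xi + h) = v1)
    (hp12 : p1.eval (xi + 2 * h) = v2)
    (hqdeg : q.natDegree ≤ 3)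
    (hqm : q.eval (xi - h) = vm1) (hq0 : q.eval xi = v0)
    (hq1 : q.eval (xi + h) = v1) (hq2 : q.eval (xi + 2 * h) = v2) :
    ∀ x ∈ Icc xi (xi + h),
      q.eval x = ((xi + 2 * h - x) / (3 * h)) * p0.eval x
          + ((x - (xi - h)) / (3 * h)) * p1.eval x ∧
      0 ≤ (xi + 2 * h - x) / (3 * h) ∧
      0 ≤ (x - (xi - h)) / (3 * h) ∧
      (xi + 2 * h - x) / (3 * h) + (x - (xi - h)) / (3 * h) = 1 := by
  have hblend := neville_aitken_of_natDegree_le (a := xi - h) (b := xi) (c := xi + h)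
    (d := xi + 2 * h) (by linarith) (by linarith) (by linarith) (by linarith) (by linarith)
    (by linarith) hp0deg hp1deg hqdeg (hp0m.trans hqm.symm) (hp00.trans hq0.symm)
    (hp01.trans hq1.symm) (hp10.trans hq0.symm) (hp11.trans hq1.symm) (hp12.trans hq2.symm)
  rintro x ⟨hxi, hxh⟩
  have hq := congrArg (eval x) hblend
  simp only [eval_mul, eval_add, eval_sub, eval_C, eval_X] at hq
  refine ⟨?_, div_nonneg (by linarith) (by positivity), div_nonneg (by linarith) (by positivity),
    by field_simp; ring⟩
  field_simp
  linear_combination hq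
end

section
/- Suppose SI_0 and SI_1 satisfy SI_0 = D + O(h^4) and SI_1 = D + O(h^4) for a common quantity D with D = O(h^2), and let ε = K·h^2 with K > 0. Then the WENO weights ω_s = α_s/(α_0+α_1), α_s = C_s/(ε+SI_s)^β (with C_0, C_1 > 0 constants summing to 1, β > 0), satisfy ω_s = C_s + O(h^2) as h → 0. -/
/-!
Write `x = ε + SI₀`, `y = ε + SI₁`. Both are at least `ε = K h²`, while `|x - y| ≤ 2 A h⁴`
because `SI₀` and `SI₁` are both within `A h⁴` of `D`. The deviation of a weight `ω_s` from `C_s`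
is controlled by the relative difference `|x - y| / min x y ≤ (2 A / K) h²`, with a factor
`β` coming from `1 - t ^ β ≤ β (t⁻¹ - 1)`.
-/

open Real

lemma Real.one_sub_rpow_le {t : ℝ} (ht : 0 < t) {β : ℝ} (hβ : 0 ≤ β) :
    1 - t ^ β ≤ β * (t⁻¹ - 1) := by
  have hexp := add_one_le_exp (log t * β)
  have hlog := one_sub_inv_le_log_of_pos ht
  rw [rpow_def_of_pos ht]
  nlinarith

lemma abs_rpow_sub_rpow_div_max_le {x y β : ℝ} (hx : 0 < x) (hy : 0 < y) (hβ : 0 ≤ β) :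
    |y ^ β - x ^ β| / max (x ^ β) (y ^ β) ≤ β * |x - y| / min x y := by
  wlog hxy : x ≤ y generalizing x y
  · simpa only [abs_sub_comm, max_comm, min_comm] using this hy hx (le_of_not_ge hxy)
  have hxyβ : x ^ β ≤ y ^ β := rpow_le_rpow hx.le hxy hβ
  have hyβ : 0 < y ^ β := rpow_pos_of_pos hy β
  rw [abs_of_nonneg (sub_nonneg.2 hxyβ), max_eq_right hxyβ, min_eq_left hxy,
    abs_of_nonpos (sub_nonpos.2 hxy)]
  have key := Real.one_sub_rpow_le (div_pos hx hy) hβ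
  rw [div_rpow hx.le hy.le] at key
  calc (y ^ β - x ^ β) / y ^ β = 1 - x ^ β / y ^ β := by field_simp
    _ ≤ β * ((x / y)⁻¹ - 1) := key
    _ = β * -(x - y) / x := by field_simp; ring

lemma div_div_add_div_sub_eq {c₀ c₁ X Y : ℝ} (hX : 0 < X) (hY : 0 < Y) (hc₀ : 0 < c₀)
    (hc₁ : 0 < c₁) (hc : c₀ + c₁ = 1) :
    c₀ / X / (c₀ / X + c₁ / Y) - c₀ = c₀ * c₁ * (Y - X) / (c₀ * Y + c₁ * X) := by
  have hS : 0 < c₀ * Y + c₁ * X := by positivity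
  rw [eq_div_iff hS.ne']
  field_simp
  linear_combination -Y * hc

lemma abs_div_div_add_div_sub_le {c₀ c₁ X Y : ℝ} (hX : 0 < X) (hY : 0 < Y) (hc₀ : 0 < c₀)
    (hc₁ : 0 < c₁) (hc : c₀ + c₁ = 1) :
    |c₀ / X / (c₀ / X + c₁ / Y) - c₀| ≤ |Y - X| / max X Y := by
  have hS : 0 < c₀ * Y + c₁ * X := by positivity
  have hmax : c₀ * c₁ * max X Y ≤ c₀ * Y + c₁ * X := by
    rcases max_cases X Y with ⟨h, -⟩ | ⟨h, -⟩ <;> rw [h]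
    · nlinarith [mul_le_mul_of_nonneg_right (by linarith : c₀ ≤ 1) (mul_pos hc₁ hX).le,
        mul_pos hc₀ hY]
    · nlinarith [mul_le_mul_of_nonneg_right (by linarith : c₁ ≤ 1) (mul_pos hc₀ hY).le,
        mul_pos hc₁ hX]
  rw [div_div_add_div_sub_eq hX hY hc₀ hc₁ hc, abs_div, abs_mul, abs_of_pos (mul_pos hc₀ hc₁),
    abs_of_pos hS, div_le_div_iff₀ hS (lt_max_of_lt_left hX)]
  calc c₀ * c₁ * |Y - X| * max X Y = |Y - X| * (c₀ * c₁ * max X Y) := by ring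
    _ ≤ |Y - X| * (c₀ * Y + c₁ * X) := mul_le_mul_of_nonneg_left hmax (abs_nonneg _)

lemma abs_rpow_weight_sub_le {c₀ c₁ x y β : ℝ} (hx : 0 < x) (hy : 0 < y) (hβ : 0 ≤ β)
    (hc₀ : 0 < c₀) (hc₁ : 0 < c₁) (hc : c₀ + c₁ = 1) :
    |c₀ / x ^ β / (c₀ / x ^ β + c₁ / y ^ β) - c₀| ≤ β * |x - y| / min x y :=
  (abs_div_div_add_div_sub_le (rpow_pos_of_pos hx β) (rpow_pos_of_pos hy β) hc₀ hc₁ hc).trans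
    (abs_rpow_sub_rpow_div_max_le hx hy hβ)

theorem stmt6_general (C0 C1 β K A : ℝ)
    (hC0 : 0 < C0) (hC1 : 0 < C1) (hsum : C0 + C1 = 1)
    (hβ : 0 < β) (hK : 0 < K)
    (SI0 SI1 D : ℝ → ℝ)
    (hSI0 : ∀ h : ℝ, 0 < h → 0 ≤ SI0 h)
    (hSI1 : ∀ h : ℝ, 0 < h → 0 ≤ SI1 h)
    (hSI0D : ∀ h : ℝ, 0 < h → |SI0 h - D h| ≤ A * h ^ 4)
    (hSI1D : ∀ h : ℝ, 0 < h → |SI1 h - D h| ≤ A * h ^ 4) :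
    ∃ M h0 : ℝ, 0 < h0 ∧ ∀ h : ℝ, 0 < h → h < h0 →
      |C0 / (K * h ^ 2 + SI0 h) ^ β /
          (C0 / (K * h ^ 2 + SI0 h) ^ β + C1 / (K * h ^ 2 + SI1 h) ^ β) - C0|
        ≤ M * h ^ 2 ∧
      |C1 / (K * h ^ 2 + SI1 h) ^ β /
          (C0 / (K * h ^ 2 + SI0 h) ^ β + C1 / (K * h ^ 2 + SI1 h) ^ β) - C1|
        ≤ M * h ^ 2 := by
  refine ⟨2 * A * β / K, 1, one_pos, fun h hh _ => ?_⟩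
  set x := K * h ^ 2 + SI0 h
  set y := K * h ^ 2 + SI1 h
  have hε : 0 < K * h ^ 2 := by positivity
  have hεx : K * h ^ 2 ≤ x := le_add_of_nonneg_right (hSI0 h hh)
  have hεy : K * h ^ 2 ≤ y := le_add_of_nonneg_right (hSI1 h hh)
  have hxy : |x - y| ≤ 2 * A * h ^ 4 :=
    calc |x - y| = |(SI0 h - D h) - (SI1 h - D h)| := by
          simp only [x, y]; ring_nf
      _ ≤ |SI0 h - D h| + |SI1 h - D h| := abs_sub _ _
      _ ≤ 2 * A * h ^ 4 := by linarith [hSI0D h hh, hSI1D h hh]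
  have hrel : β * |x - y| / min x y ≤ 2 * A * β / K * h ^ 2 :=
    calc β * |x - y| / min x y ≤ β * |x - y| / (K * h ^ 2) :=
          div_le_div_of_nonneg_left (by positivity) hε (le_min hεx hεy)
      _ ≤ β * (2 * A * h ^ 4) / (K * h ^ 2) := by gcongr
      _ = 2 * A * β / K * h ^ 2 := by field_simp
  have hx : 0 < x := hε.trans_le hεx
  have hy : 0 < y := hε.trans_le hεy
  refine ⟨(abs_rpow_weight_sub_le hx hy hβ.le hC0 hC1 hsum).trans hrel, ?_⟩
  have h₁ := abs_rpow_weight_sub_le hy hx hβ.le hC1 hC0 (by linarith)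
  rw [add_comm (C1 / _), abs_sub_comm y, min_comm] at h₁
  exact h₁.trans hrel

theorem stmt6 (C0 C1 β K A B : ℝ)
    (hC0 : 0 < C0) (hC1 : 0 < C1) (hsum : C0 + C1 = 1)
    (hβ : 0 < β) (hK : 0 < K) (hA : 0 ≤ A) (hB : 0 ≤ B)
    (SI0 SI1 D : ℝ → ℝ)
    (hSI0 : ∀ h : ℝ, 0 < h → 0 ≤ SI0 h)
    (hSI1 : ∀ h : ℝ, 0 < h → 0 ≤ SI1 h)
    (hD : ∀ h : ℝ, 0 < h → 0 ≤ D h)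
    (hSI0D : ∀ h : ℝ, 0 < h → |SI0 h - D h| ≤ A * h ^ 4)
    (hSI1D : ∀ h : ℝ, 0 < h → |SI1 h - D h| ≤ A * h ^ 4)
    (hDB : ∀ h : ℝ, 0 < h → D h ≤ B * h ^ 2) :
    ∃ M h0 : ℝ, 0 < h0 ∧ ∀ h : ℝ, 0 < h → h < h0 →
      |C0 / (K * h ^ 2 + SI0 h) ^ β /
          (C0 / (K * h ^ 2 + SI0 h) ^ β + C1 / (K * h ^ 2 + SI1 h) ^ β) - C0|
        ≤ M * h ^ 2 ∧
      |C1 / (K * h ^ 2 + SI1 h) ^ β /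
          (C0 / (K * h ^ 2 + SI0 h) ^ β + C1 / (K * h ^ 2 + SI1 h) ^ β) - C1|
        ≤ M * h ^ 2 :=
  stmt6_general C0 C1 β K A hC0 hC1 hsum hβ hK SI0 SI1 D hSI0 hSI1 hSI0D hSI1D
end

section
/- Let f : ℝ² → ℝ be C^4, let (x, y) be a grid point, and consider the four quadratic interpolants p^{γ_k} of f along the four lines through (x, y) with directions γ_k = γ_0 + kπ/2 (k = 0,1,2,3) on stencils of width O(h). Then the ideal combination q = δ(C_0 p^{γ_0} + C_2 p^{γ_2}) + (1-δ)(C_1 p^{γ_1} + C_3 p^{γ_3}) with C_k = 1/2 and any δ ∈ [0,1] satisfies q = f(x, y) + O(h^4). -/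
/-!
Along the line through `p` in direction `γ`, write `g s = f (p + s • (cos γ, sin γ))`. A quadratic
interpolating `g` at `-t, t, 3t` takes at `0` the value `3/8 g(-t) + 3/4 g(t) - 1/8 g(3t)`. The
direction `γ + π` runs along the same line backwards, so the average of the two opposite
interpolants is the symmetric rule `9/16 (g t + g(-t)) - 1/16 (g(3t) + g(-3t))`, which is exact on
cubics. Taylor's theorem with Lagrange remainder, applied to `g` (whose fourth derivative is
bounded by that of `f`, the direction being a unit vector), bounds its error by `15/32 M t^4`.
Both pair averages thus lie in the same closed ball around `f p`, and so does every convex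
combination of them.
-/

open Set Polynomial

open scoped Nat

theorem abs_sub_taylor_le {g : ℝ → ℝ} {n : ℕ} (hg : ContDiff ℝ (n + 1) g) {M : ℝ}
    (hM : ∀ s, |iteratedDeriv (n + 1) g s| ≤ M) (x₀ x : ℝ) :
    |g x - ∑ k ∈ Finset.range (n + 1), iteratedDeriv k g x₀ / k ! * (x - x₀) ^ k|
      ≤ M * |x - x₀| ^ (n + 1) / (n + 1)! := by
  rcases eq_or_ne x₀ x with rfl | hx
  · simp [Finset.sum_range_succ']
  obtain ⟨x', -, hx'⟩ :=
    taylor_mean_remainder_lagrange_iteratedDeriv hx hg.contDiffOn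
  have htaylor : taylorWithinEval g n (uIcc x₀ x) x₀ x
      = ∑ k ∈ Finset.range (n + 1), iteratedDeriv k g x₀ / k ! * (x - x₀) ^ k := by
    rw [taylor_within_apply]
    refine Finset.sum_congr rfl fun k hk => ?_
    rw [iteratedDerivWithin_eq_iteratedDeriv (uniqueDiffOn_uIcc hx)
      (hg.contDiffAt.of_le (by exact_mod_cast (Finset.mem_range.1 hk).le)) left_mem_uIcc,
      smul_eq_mul]
    ring
  rw [← htaylor, hx', abs_div, abs_mul, abs_pow, Nat.abs_cast]
  gcongr
  exact hM x'

theorem abs_symmetric_four_point_sub_le {g : ℝ → ℝ} (hg : ContDiff ℝ 4 g) {M : ℝ}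
    (hM : ∀ s, |iteratedDeriv 4 g s| ≤ M) (t : ℝ) :
    |9 / 16 * (g t + g (-t)) - 1 / 16 * (g (3 * t) + g (-(3 * t))) - g 0|
      ≤ 15 / 32 * M * t ^ 4 := by
  set T : ℝ → ℝ := fun s => ∑ k ∈ Finset.range 4, iteratedDeriv k g 0 / k ! * s ^ k
  have hR : ∀ s, |g s - T s| ≤ M * s ^ 4 / 24 := fun s => by
    have h := abs_sub_taylor_le (n := 3) hg hM 0 s
    rwa [sub_zero, (by decide : Even 4).pow_abs,
      show ((3 + 1)! : ℝ) = 24 by norm_num [Nat.factorial]] at h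
  have hexact : 9 / 16 * (T t + T (-t)) - 1 / 16 * (T (3 * t) + T (-(3 * t))) = g 0 := by
    simp only [T, Finset.sum_range_succ, Finset.sum_range_zero, iteratedDeriv_zero,
      Nat.factorial]
    push_cast
    ring
  have h1 := abs_le.1 (hR t)
  have h2 := abs_le.1 (hR (-t))
  have h3 := abs_le.1 (hR (3 * t))
  have h4 := abs_le.1 (hR (-(3 * t)))
  -- the remainders add up to `(2 * 9 / 16 + 2 * 3 ^ 4 / 16) / 4! = 15 / 32`
  rw [abs_le]
  constructor <;> linarith

theorem eval_zero_eq_of_natDegree_le_two {P : ℝ[X]} (hP : P.natDegree ≤ 2) (t : ℝ) :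
    P.eval 0 = 3 / 8 * P.eval (-t) + 3 / 4 * P.eval t - 1 / 8 * P.eval (3 * t) := by
  simp only [eval_eq_sum_range' (Nat.lt_succ_of_le hP), Finset.sum_range_succ,
    Finset.sum_range_zero]
  ring

theorem norm_iteratedDeriv_comp_line_le {E F : Type*} [NormedAddCommGroup E] [NormedSpace ℝ E]
    [NormedAddCommGroup F] [NormedSpace ℝ F] {n : ℕ} {f : E → F} (hf : ContDiff ℝ n f)
    (p v : E) (s : ℝ) :
    ‖iteratedDeriv n (fun u : ℝ => f (p + u • v)) s‖
      ≤ ‖iteratedFDeriv ℝ n f (p + s • v)‖ * ‖v‖ ^ n := by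
  set L := ContinuousLinearMap.toSpanSingleton ℝ v
  have hcomp : (fun u : ℝ => f (p + u • v)) = (fun w => f (p + w)) ∘ L := rfl
  rw [← norm_iteratedFDeriv_eq_norm_iteratedDeriv, hcomp,
    L.iteratedFDeriv_comp_right (f := fun w => f (p + w))
      (hf.comp (contDiff_const.add contDiff_id)) s le_rfl,
    iteratedFDeriv_comp_add_left]
  refine (ContinuousMultilinearMap.norm_compContinuousLinearMap_le _ _).trans_eq ?_
  simp [L, ContinuousLinearMap.norm_toSpanSingleton]

noncomputable def lineRestrict (f : ℝ × ℝ → ℝ) (p : ℝ × ℝ) (γ : ℝ) (s : ℝ) : ℝ :=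
  f (p + s • (Real.cos γ, Real.sin γ))

theorem lineRestrict_zero (f : ℝ × ℝ → ℝ) (p : ℝ × ℝ) (γ : ℝ) : lineRestrict f p γ 0 = f p := by
  simp [lineRestrict]

theorem lineRestrict_add_pi (f : ℝ × ℝ → ℝ) (p : ℝ × ℝ) (γ s : ℝ) :
    lineRestrict f p (γ + Real.pi) s = lineRestrict f p γ (-s) := by
  simp [lineRestrict, Real.cos_add_pi, Real.sin_add_pi]

theorem abs_iteratedDeriv_lineRestrict_le {n : ℕ} {f : ℝ × ℝ → ℝ} (hf : ContDiff ℝ n f) {M : ℝ}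
    (hM : 0 ≤ M) (hbound : ∀ z, ‖iteratedFDeriv ℝ n f z‖ ≤ M) (p : ℝ × ℝ) (γ s : ℝ) :
    |iteratedDeriv n (lineRestrict f p γ) s| ≤ M := by
  have hdir : ‖(Real.cos γ, Real.sin γ)‖ ≤ 1 :=
    max_le (by simpa using Real.abs_cos_le_one γ) (by simpa using Real.abs_sin_le_one γ)
  calc |iteratedDeriv n (lineRestrict f p γ) s|
      ≤ ‖iteratedFDeriv ℝ n f (p + s • (Real.cos γ, Real.sin γ))‖
          * ‖(Real.cos γ, Real.sin γ)‖ ^ n := norm_iteratedDeriv_comp_line_le hf _ _ s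
    _ ≤ M * 1 ^ n := by gcongr; exact hbound _
    _ = M := by ring

theorem abs_avg_opposite_interpolants_sub_le {f : ℝ × ℝ → ℝ} (hf : ContDiff ℝ 4 f) {M : ℝ}
    (hM : 0 ≤ M) (hbound : ∀ z, ‖iteratedFDeriv ℝ 4 f z‖ ≤ M) {p : ℝ × ℝ} {γ t : ℝ}
    {P Q : ℝ[X]} (hP : P.natDegree ≤ 2) (hQ : Q.natDegree ≤ 2)
    (hPf : ∀ s ∈ ({-t, t, 3 * t} : Set ℝ), P.eval s = lineRestrict f p γ s)
    (hQf : ∀ s ∈ ({-t, t, 3 * t} : Set ℝ), Q.eval s = lineRestrict f p (γ + Real.pi) s) :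
    |(P.eval 0 + Q.eval 0) / 2 - f p| ≤ 15 / 32 * M * t ^ 4 := by
  set g := lineRestrict f p γ
  have hg : ContDiff ℝ 4 g := hf.comp (contDiff_const.add (contDiff_id.smul contDiff_const))
  have hPQ : (P.eval 0 + Q.eval 0) / 2
      = 9 / 16 * (g t + g (-t)) - 1 / 16 * (g (3 * t) + g (-(3 * t))) := by
    rw [eval_zero_eq_of_natDegree_le_two hP t, eval_zero_eq_of_natDegree_le_two hQ t,
      hPf _ (by simp), hPf _ (by simp), hPf _ (by simp),
      hQf _ (by simp), hQf _ (by simp), hQf _ (by simp),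
      lineRestrict_add_pi, lineRestrict_add_pi, lineRestrict_add_pi, neg_neg]
    ring
  rw [hPQ, ← lineRestrict_zero f p γ]
  exact abs_symmetric_four_point_sub_le hg
    (abs_iteratedDeriv_lineRestrict_le hf hM hbound p γ) t

theorem stmt12_general (a M : ℝ) (hM : 0 ≤ M) :
    ∃ C : ℝ, ∀ (f : ℝ × ℝ → ℝ) (x y γ0 δ h : ℝ) (P : Fin 4 → Polynomial ℝ),
      0 < h → h ≤ 1 → 0 ≤ δ → δ ≤ 1 →
      ContDiff ℝ 4 f →
      (∀ i : ℕ, i ≤ 4 → ∀ z : ℝ × ℝ, ‖iteratedFDeriv ℝ i f z‖ ≤ M) →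
      (∀ k : Fin 4, (P k).natDegree ≤ 2) →
      (∀ k : Fin 4, ∀ s ∈ ({-(a * h), a * h, 3 * (a * h)} : Set ℝ),
        (P k).eval s
          = f (x + s * Real.cos (γ0 + (k : ℕ) * (Real.pi / 2)),
               y + s * Real.sin (γ0 + (k : ℕ) * (Real.pi / 2)))) →
      |δ * (((P 0).eval 0 + (P 2).eval 0) / 2)
        + (1 - δ) * (((P 1).eval 0 + (P 3).eval 0) / 2) - f (x, y)|
        ≤ C * h ^ 4 := by
  refine ⟨15 / 32 * M * a ^ 4, fun f x y γ0 δ h P _ _ hδ0 hδ1 hf hbound hdeg hval => ?_⟩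
  have hline : ∀ (k : Fin 4) (γ : ℝ), γ0 + (k : ℕ) * (Real.pi / 2) = γ →
      ∀ s ∈ ({-(a * h), a * h, 3 * (a * h)} : Set ℝ),
        (P k).eval s = lineRestrict f (x, y) γ s := by
    rintro k γ rfl s hs
    exact hval k s hs
  have pair := fun {k l : Fin 4} {γ : ℝ} hk hl =>
    abs_avg_opposite_interpolants_sub_le hf hM (hbound 4 le_rfl) (hdeg k) (hdeg l)
      (hline k γ hk) (hline l (γ + Real.pi) hl)
  have h02 := pair (k := 0) (l := 2) (γ := γ0) (by simp)
    (by simp only [Fin.coe_ofNat_eq_mod, Nat.reduceMod, Nat.cast_ofNat]; ring)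
  have h13 := pair (k := 1) (l := 3) (γ := γ0 + Real.pi / 2) (by simp)
    (by simp only [Fin.coe_ofNat_eq_mod, Nat.reduceMod, Nat.cast_ofNat]; ring)
  have hcombo := convex_closedBall (f (x, y)) (15 / 32 * M * (a * h) ^ 4)
    (Metric.mem_closedBall.2 h02) (Metric.mem_closedBall.2 h13) hδ0 (sub_nonneg.2 hδ1)
    (add_sub_cancel δ 1)
  rw [Metric.mem_closedBall, Real.dist_eq] at hcombo
  simpa [mul_pow, mul_assoc] using hcombo

theorem stmt12 (a M : ℝ) (ha : 0 < a) (hM : 0 ≤ M) :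
    ∃ C : ℝ, ∀ (f : ℝ × ℝ → ℝ) (x y γ0 δ h : ℝ) (P : Fin 4 → Polynomial ℝ),
      0 < h → h ≤ 1 → 0 ≤ δ → δ ≤ 1 →
      ContDiff ℝ 4 f →
      (∀ i : ℕ, i ≤ 4 → ∀ z : ℝ × ℝ, ‖iteratedFDeriv ℝ i f z‖ ≤ M) →
      (∀ k : Fin 4, (P k).natDegree ≤ 2) →
      (∀ k : Fin 4, ∀ s ∈ ({-(a * h), a * h, 3 * (a * h)} : Set ℝ),
        (P k).eval s
          = f (x + s * Real.cos (γ0 + (k : ℕ) * (Real.pi / 2)),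
               y + s * Real.sin (γ0 + (k : ℕ) * (Real.pi / 2)))) →
      |δ * (((P 0).eval 0 + (P 2).eval 0) / 2)
        + (1 - δ) * (((P 1).eval 0 + (P 3).eval 0) / 2) - f (x, y)|
        ≤ C * h ^ 4 :=
  stmt12_general a M hM
end

section
/- For a C^4 one-dimensional function g and equidistant parameter nodes, the average of the two quadratic interpolants evaluated at 0, where one uses nodes {-a h, a h, 3 a h} and the other uses nodes {a h, -a h, -3 a h} (i.e., the reversed direction), equals the value at 0 of the cubic interpolant on the symmetric four-node stencil {-3 a h, -a h, a h, 3 a h}, and hence differs from g(0) by O(h^4). -/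
open Set Polynomial
open scoped Nat

/-!
Extrapolating to `0` with the quadratic through `-t, t, 3t` uses the weights `3/8, 3/4, -1/8`;
averaging it with its mirror image (step `-t`) gives the weights `9/16, -1/16` of the symmetric
four-point stencil, which is exact on cubics. Its error on `g` is therefore the same combination of
the cubic Taylor remainders of `g` at the nodes, each `O(t ^ 4)` by Lagrange's form of the
remainder.
-/

section Stencils

variable {K : Type*} [Field K]

def quadraticStencil (f : K → K) (t : K) : K :=
  3 / 8 * f (-t) + 3 / 4 * f t - 1 / 8 * f (3 * t)

def centralStencil (f : K → K) (t : K) : K :=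
  9 / 16 * (f t + f (-t)) - 1 / 16 * (f (3 * t) + f (-(3 * t)))

variable [CharZero K]

theorem quadraticStencil_add_quadraticStencil_neg (f : K → K) (t : K) :
    (quadraticStencil f t + quadraticStencil f (-t)) / 2 = centralStencil f t := by
  simp only [quadraticStencil, centralStencil, neg_neg, mul_neg]
  ring

theorem Polynomial.eval_zero_eq_quadraticStencil {p : K[X]} (hp : p.natDegree ≤ 2) (t : K) :
    p.eval 0 = quadraticStencil (fun x => p.eval x) t := by
  simp only [quadraticStencil, eval_eq_sum_range' (Nat.lt_succ_of_le hp), Finset.sum_range_succ,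
    Finset.sum_range_zero]
  ring

theorem Polynomial.eval_zero_eq_centralStencil {p : K[X]} (hp : p.natDegree ≤ 3) (t : K) :
    p.eval 0 = centralStencil (fun x => p.eval x) t := by
  simp only [centralStencil, eval_eq_sum_range' (Nat.lt_succ_of_le hp), Finset.sum_range_succ,
    Finset.sum_range_zero]
  ring

end Stencils

theorem abs_sub_taylorWithinEval_univ_le {f : ℝ → ℝ} {n : ℕ} (hf : ContDiff ℝ (n + 1) f)
    {x₀ x M : ℝ} (hM : ∀ y ∈ uIcc x₀ x, |iteratedDeriv (n + 1) f y| ≤ M) :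
    |f x - taylorWithinEval f n univ x₀ x| ≤ M * |x - x₀| ^ (n + 1) / (n + 1)! := by
  rcases eq_or_ne x₀ x with rfl | hx
  · simp
  obtain ⟨y, hy, hrem⟩ := taylor_mean_remainder_lagrange_iteratedDeriv hx hf.contDiffOn
  have htaylor : taylorWithinEval f n (uIcc x₀ x) x₀ x = taylorWithinEval f n univ x₀ x := by
    simp only [taylor_within_apply, iteratedDerivWithin_univ]
    refine Finset.sum_congr rfl fun k hk => ?_
    rw [iteratedDerivWithin_eq_iteratedDeriv (uniqueDiffOn_uIcc hx) _ left_mem_uIcc]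
    exact (hf.of_le (by exact_mod_cast (Finset.mem_range.mp hk).le)).contDiffAt
  rw [← htaylor, hrem, abs_div, abs_mul, abs_pow, Nat.abs_cast]
  gcongr
  exact hM y (uIoo_subset_uIcc_self hy)

theorem centralStencil_taylorWithinEval_three (g : ℝ → ℝ) (t : ℝ) :
    centralStencil (taylorWithinEval g 3 univ 0) t = g 0 := by
  simp only [centralStencil, taylorWithinEval_succ, taylor_within_zero_eval]
  ring

theorem abs_centralStencil_sub_le {g : ℝ → ℝ} (hg : ContDiff ℝ 4 g) {t M : ℝ} (ht : 0 ≤ t)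
    (hM : ∀ y ∈ Icc (-(3 * t)) (3 * t), |iteratedDeriv 4 g y| ≤ M) :
    |centralStencil g t - g 0| ≤ 15 / 32 * M * t ^ 4 := by
  set T := taylorWithinEval g 3 univ 0
  have hrem : ∀ x, |x| ≤ 3 * t → |g x - T x| ≤ M * x ^ 4 / 24 := by
    intro x hx
    have hMx : ∀ y ∈ uIcc 0 x, |iteratedDeriv (3 + 1) g y| ≤ M := by
      intro y hy
      refine hM y ?_
      rw [abs_le] at hx
      rcases mem_uIcc.mp hy with ⟨h0, h1⟩ | ⟨h0, h1⟩ <;> constructor <;> linarith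
    have hx4 : |x - 0| ^ (3 + 1) = x ^ 4 := by rw [sub_zero, Even.pow_abs ⟨2, rfl⟩]
    have h24 : ((3 + 1)! : ℝ) = 24 := by norm_num [Nat.factorial]
    simpa only [hx4, h24] using abs_sub_taylorWithinEval_univ_le (n := 3) hg hMx
  have hsplit : centralStencil g t - g 0 = centralStencil (fun x => g x - T x) t := by
    rw [← centralStencil_taylorWithinEval_three g t]
    simp only [centralStencil]
    ring
  have h₁ := abs_le.mp (hrem t (by rw [abs_of_nonneg ht]; linarith))
  have h₂ := abs_le.mp (hrem (-t) (by rw [abs_neg, abs_of_nonneg ht]; linarith))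
  have h₃ := abs_le.mp (hrem (3 * t) (by rw [abs_of_nonneg (by positivity)]))
  have h₄ := abs_le.mp (hrem (-(3 * t)) (by rw [abs_neg, abs_of_nonneg (by positivity)]))
  rw [hsplit, centralStencil, abs_le]
  constructor <;> linarith

theorem stmt13_general (a M : ℝ) (ha : 0 < a) :
    ∃ C : ℝ, ∀ (g : ℝ → ℝ) (h : ℝ) (pPlus pMinus q : Polynomial ℝ),
      0 < h → ContDiff ℝ 4 g →
      (∀ t ∈ Icc (-(3 * (a * h))) (3 * (a * h)), |iteratedDeriv 4 g t| ≤ M) →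
      pPlus.natDegree ≤ 2 →
      pPlus.eval (-(a * h)) = g (-(a * h)) → pPlus.eval (a * h) = g (a * h) →
      pPlus.eval (3 * (a * h)) = g (3 * (a * h)) →
      pMinus.natDegree ≤ 2 →
      pMinus.eval (a * h) = g (a * h) → pMinus.eval (-(a * h)) = g (-(a * h)) →
      pMinus.eval (-(3 * (a * h))) = g (-(3 * (a * h))) →
      q.natDegree ≤ 3 →
      q.eval (-(3 * (a * h))) = g (-(3 * (a * h))) →
      q.eval (-(a * h)) = g (-(a * h)) → q.eval (a * h) = g (a * h) →
      q.eval (3 * (a * h)) = g (3 * (a * h)) →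
      (pPlus.eval 0 + pMinus.eval 0) / 2 = q.eval 0 ∧
      |q.eval 0 - g 0| ≤ C * h ^ 4 := by
  refine ⟨15 / 32 * M * a ^ 4, ?_⟩
  intro g h pPlus pMinus q hh hg hgM hpd hp₁ hp₂ hp₃ hmd hm₁ hm₂ hm₃ hqd hq₁ hq₂ hq₃ hq₄
  have hp : pPlus.eval 0 = quadraticStencil g (a * h) := by
    rw [eval_zero_eq_quadraticStencil hpd (a * h)]
    simp only [quadraticStencil, hp₁, hp₂, hp₃]
  have hm : pMinus.eval 0 = quadraticStencil g (-(a * h)) := by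
    rw [eval_zero_eq_quadraticStencil hmd (-(a * h))]
    simp only [quadraticStencil, neg_neg, mul_neg, hm₁, hm₂, hm₃]
  have hq : q.eval 0 = centralStencil g (a * h) := by
    rw [eval_zero_eq_centralStencil hqd (a * h)]
    simp only [centralStencil, hq₁, hq₂, hq₃, hq₄]
  refine ⟨by rw [hp, hm, hq, quadraticStencil_add_quadraticStencil_neg], ?_⟩
  rw [hq, show 15 / 32 * M * a ^ 4 * h ^ 4 = 15 / 32 * M * (a * h) ^ 4 by ring]
  exact abs_centralStencil_sub_le hg (mul_pos ha hh).le hgM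

theorem stmt13 (a M : ℝ) (ha : 0 < a) (hM : 0 ≤ M) :
    ∃ C : ℝ, ∀ (g : ℝ → ℝ) (h : ℝ) (pPlus pMinus q : Polynomial ℝ),
      0 < h → ContDiff ℝ 4 g →
      (∀ t ∈ Icc (-(3 * (a * h))) (3 * (a * h)), |iteratedDeriv 4 g t| ≤ M) →
      pPlus.natDegree ≤ 2 →
      pPlus.eval (-(a * h)) = g (-(a * h)) → pPlus.eval (a * h) = g (a * h) →
      pPlus.eval (3 * (a * h)) = g (3 * (a * h)) →
      pMinus.natDegree ≤ 2 →
      pMinus.eval (a * h) = g (a * h) → pMinus.eval (-(a * h)) = g (-(a * h)) →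
      pMinus.eval (-(3 * (a * h))) = g (-(3 * (a * h))) →
      q.natDegree ≤ 3 →
      q.eval (-(3 * (a * h))) = g (-(3 * (a * h))) →
      q.eval (-(a * h)) = g (-(a * h)) → q.eval (a * h) = g (a * h) →
      q.eval (3 * (a * h)) = g (3 * (a * h)) →
      (pPlus.eval 0 + pMinus.eval 0) / 2 = q.eval 0 ∧
      |q.eval 0 - g 0| ≤ C * h ^ 4 :=
  stmt13_general a M ha
end

section
/- Given positive reals α_0, α_1, α_2, α_3 with the pairing property: α_k = 0.5/(ε + D_k)^β where ε = K h², β ≥ 1, and D_0, D_2 agree up to O(h^4) (as do D_1, D_3) with all D_k = O(h²), define δ = (α_0 + α_2)/(Σ α_k) and ω_k = α_k/(Σ α_j). Then ω_0/δ = 1/2 + O(h²), ω_2/δ = 1/2 + O(h²), ω_1/(1-δ) = 1/2 + O(h²), and ω_3/(1-δ) = 1/2 + O(h²). -/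
/-!
Write `u = (K h² + D₀)^β` and `v = (K h² + D₂)^β`. The ratio `ω₀/δ` equals `α₀/(α₀ + α₂) = v/(u + v)`,
which differs from `1/2` by `|u - v| / (2 (u + v))`. Both bases lie in `[K h², (K + B) h²]` and differ
by `O(h⁴)`, so the mean value theorem bounds `|u - v|` by `β ((K + B) h²)^(β-1) · A h⁴`, while
`u + v ≥ 2 (K h²)^β`; the powers of `h` combine to `h²`. The other three ratios are the same with
the roles of the indices exchanged.
-/

open Set

lemma abs_rpow_sub_rpow_le {β x y c : ℝ} (hβ : 1 ≤ β) (hx : x ∈ Icc 0 c) (hy : y ∈ Icc 0 c) :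
    |x ^ β - y ^ β| ≤ β * c ^ (β - 1) * |x - y| := by
  have hderiv : ∀ t ∈ Icc 0 c,
      HasDerivWithinAt (fun t : ℝ => t ^ β) (β * t ^ (β - 1)) (Icc 0 c) t :=
    fun t _ => (Real.hasDerivAt_rpow_const (Or.inr hβ)).hasDerivWithinAt
  have hbound : ∀ t ∈ Icc 0 c, ‖β * t ^ (β - 1)‖ ≤ β * c ^ (β - 1) := by
    rintro t ⟨ht0, htc⟩
    rw [Real.norm_eq_abs, abs_of_nonneg (by positivity)]
    gcongr
  simpa only [Real.norm_eq_abs] using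
    (convex_Icc 0 c).norm_image_sub_le_of_norm_hasDerivWithin_le hderiv hbound hy hx

lemma half_div_div_half_div_add_sub_half {u v : ℝ} (hu : 0 < u) (hv : 0 < v) :
    1 / 2 / u / (1 / 2 / u + 1 / 2 / v) - 1 / 2 = (v - u) / (2 * (u + v)) := by
  field_simp
  ring

lemma abs_half_div_rpow_pair_sub_half_le {K A B β s d e : ℝ} (hK : 0 < K) (hβ : 1 ≤ β)
    (hs : 0 < s) (hd : 0 ≤ d) (he : 0 ≤ e) (hdB : d ≤ B * s) (heB : e ≤ B * s)
    (hde : |d - e| ≤ A * s ^ 2) :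
    |1 / 2 / (K * s + d) ^ β / (1 / 2 / (K * s + d) ^ β + 1 / 2 / (K * s + e) ^ β) - 1 / 2|
      ≤ β * A * (K + B) ^ (β - 1) / (4 * K ^ β) * s := by
  have hB : 0 ≤ B := le_of_mul_le_mul_right (by linarith) hs
  set x := K * s + d
  set y := K * s + e
  have hx : 0 < x := by positivity
  have hy : 0 < y := by positivity
  have hxc : x ∈ Icc 0 ((K + B) * s) := ⟨hx.le, by linarith [add_mul K B s]⟩
  have hyc : y ∈ Icc 0 ((K + B) * s) := ⟨hy.le, by linarith [add_mul K B s]⟩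
  have hnum : |y ^ β - x ^ β| ≤ β * ((K + B) * s) ^ (β - 1) * (A * s ^ 2) := by
    refine (abs_rpow_sub_rpow_le hβ hyc hxc).trans ?_
    gcongr
    rwa [abs_sub_comm, show x - y = d - e by ring]
  have hden : 4 * (K * s) ^ β ≤ 2 * (x ^ β + y ^ β) := by
    have hxβ : (K * s) ^ β ≤ x ^ β := by gcongr; linarith
    have hyβ : (K * s) ^ β ≤ y ^ β := by gcongr; linarith
    linarith
  calc _ = |y ^ β - x ^ β| / (2 * (x ^ β + y ^ β)) := by
        rw [half_div_div_half_div_add_sub_half (by positivity) (by positivity), abs_div,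
          abs_of_pos (show 0 < 2 * (x ^ β + y ^ β) by positivity)]
    _ ≤ β * ((K + B) * s) ^ (β - 1) * (A * s ^ 2) / (4 * (K * s) ^ β) :=
        div_le_div₀ ((abs_nonneg _).trans hnum) hnum (by positivity) hden
    _ = β * A * (K + B) ^ (β - 1) / (4 * K ^ β) * s := by
        rw [Real.mul_rpow (by positivity) hs.le, Real.mul_rpow hK.le hs.le,
          Real.rpow_sub_one hs.ne']
        field_simp

theorem stmt14_general (K A B β : ℝ) (hK : 0 < K) (hβ : 1 ≤ β)
    (D : Fin 4 → ℝ → ℝ)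
    (hDnn : ∀ (k : Fin 4) (h : ℝ), 0 < h → 0 ≤ D k h)
    (h02 : ∀ h : ℝ, 0 < h → h < 1 → |D 0 h - D 2 h| ≤ A * h ^ 4)
    (h13 : ∀ h : ℝ, 0 < h → h < 1 → |D 1 h - D 3 h| ≤ A * h ^ 4)
    (hall : ∀ (k : Fin 4) (h : ℝ), 0 < h → h < 1 → D k h ≤ B * h ^ 2) :
    ∃ M h0 : ℝ, 0 < h0 ∧ ∀ h : ℝ, 0 < h → h < h0 →
      let α : Fin 4 → ℝ := fun k => (1 / 2) / (K * h ^ 2 + D k h) ^ β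
      let T : ℝ := α 0 + α 1 + α 2 + α 3
      let δ : ℝ := (α 0 + α 2) / T
      |(α 0 / T) / δ - 1 / 2| ≤ M * h ^ 2 ∧
      |(α 2 / T) / δ - 1 / 2| ≤ M * h ^ 2 ∧
      |(α 1 / T) / (1 - δ) - 1 / 2| ≤ M * h ^ 2 ∧
      |(α 3 / T) / (1 - δ) - 1 / 2| ≤ M * h ^ 2 := by
  refine ⟨β * A * (K + B) ^ (β - 1) / (4 * K ^ β), 1, one_pos, fun h hh hh1 => ?_⟩
  intro α T δ
  have pair : ∀ i j : Fin 4, |D i h - D j h| ≤ A * (h ^ 2) ^ 2 →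
      |α i / (α i + α j) - 1 / 2| ≤ β * A * (K + B) ^ (β - 1) / (4 * K ^ β) * h ^ 2 :=
    fun i j hij => abs_half_div_rpow_pair_sub_half_le hK hβ (by positivity) (hDnn i h hh)
      (hDnn j h hh) (hall i h hh hh1) (hall j h hh hh1) hij
  have hA02 : |D 0 h - D 2 h| ≤ A * (h ^ 2) ^ 2 := by rw [← pow_mul]; exact h02 h hh hh1
  have hA13 : |D 1 h - D 3 h| ≤ A * (h ^ 2) ^ 2 := by rw [← pow_mul]; exact h13 h hh hh1
  have hα : ∀ k, 0 < α k := fun k => by have := hDnn k h hh; positivity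
  have hT : T ≠ 0 := by have := hα 0; have := hα 1; have := hα 2; have := hα 3; positivity
  have h1δ : 1 - δ = (α 1 + α 3) / T := by
    rw [one_sub_div hT]; congr 1; ring
  simp only [δ, h1δ, div_div_div_cancel_right₀ hT]
  refine ⟨pair 0 2 hA02, ?_, pair 1 3 hA13, ?_⟩
  · rw [add_comm]; exact pair 2 0 (abs_sub_comm (D 2 h) _ ▸ hA02)
  · rw [add_comm]; exact pair 3 1 (abs_sub_comm (D 3 h) _ ▸ hA13)

theorem stmt14 (K A B β : ℝ) (hK : 0 < K) (hβ : 1 ≤ β) (hA : 0 ≤ A) (hB : 0 ≤ B)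
    (D : Fin 4 → ℝ → ℝ)
    (hDnn : ∀ (k : Fin 4) (h : ℝ), 0 < h → 0 ≤ D k h)
    (h02 : ∀ h : ℝ, 0 < h → h < 1 → |D 0 h - D 2 h| ≤ A * h ^ 4)
    (h13 : ∀ h : ℝ, 0 < h → h < 1 → |D 1 h - D 3 h| ≤ A * h ^ 4)
    (hall : ∀ (k : Fin 4) (h : ℝ), 0 < h → h < 1 → D k h ≤ B * h ^ 2) :
    ∃ M h0 : ℝ, 0 < h0 ∧ ∀ h : ℝ, 0 < h → h < h0 →
      let α : Fin 4 → ℝ := fun k => (1 / 2) / (K * h ^ 2 + D k h) ^ β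
      let T : ℝ := α 0 + α 1 + α 2 + α 3
      let δ : ℝ := (α 0 + α 2) / T
      |(α 0 / T) / δ - 1 / 2| ≤ M * h ^ 2 ∧
      |(α 2 / T) / δ - 1 / 2| ≤ M * h ^ 2 ∧
      |(α 1 / T) / (1 - δ) - 1 / 2| ≤ M * h ^ 2 ∧
      |(α 3 / T) / (1 - δ) - 1 / 2| ≤ M * h ^ 2 :=
  stmt14_general K A B β hK hβ D hDnn h02 h13 hall
end

section
/- Let ε = K h² with K > 0, β > 0, and let D, D' ≥ 0 satisfy |D' - D| ≤ A h^4 and D ≤ B h². Then 1/(ε + D)^β = (1/(ε + D')^β)·(1 + r) with |r| ≤ M h² for some constant M depending only on K, A, B, β (for h small enough). -/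
/-! With `x = ε + D` and `y = ε + D'`, the ratio is `(1 / x ^ β) / (1 / y ^ β) = (y / x) ^ β`.
Since `x ≥ ε = K h²` and `|y - x| ≤ A h⁴`, the quotient `y / x` lies within `(A / K) h²` of `1`,
so for small `h` it stays in `[1/2, 3/2]`, where `t ↦ t ^ β` is Lipschitz by the mean value
theorem. Hence `r = (y / x) ^ β - 1` is `O(h²)`. -/

open Set

lemma Real.rpow_le_add_rpow_of_mem_Icc {a b x : ℝ} (ha : 0 < a) (hx : x ∈ Icc a b) (γ : ℝ) :
    x ^ γ ≤ a ^ γ + b ^ γ := by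
  have hx0 : 0 < x := ha.trans_le hx.1
  rcases le_or_gt 0 γ with hγ | hγ
  · have := Real.rpow_le_rpow hx0.le hx.2 hγ
    linarith [Real.rpow_nonneg ha.le γ]
  · have := Real.rpow_le_rpow_of_nonpos ha hx.1 hγ.le
    linarith [Real.rpow_nonneg (ha.le.trans (hx.1.trans hx.2)) γ]

lemma Real.abs_rpow_sub_rpow_le_of_mem_Icc {a b s t : ℝ} (ha : 0 < a) (hs : s ∈ Icc a b)
    (ht : t ∈ Icc a b) (β : ℝ) :
    |t ^ β - s ^ β| ≤ |β| * (a ^ (β - 1) + b ^ (β - 1)) * |t - s| := by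
  have hderiv : ∀ x ∈ Icc a b,
      HasDerivWithinAt (fun y : ℝ => y ^ β) (β * x ^ (β - 1)) (Icc a b) x := fun x hx =>
    (Real.hasDerivAt_rpow_const (Or.inl (ha.trans_le hx.1).ne')).hasDerivWithinAt
  have hbound : ∀ x ∈ Icc a b, ‖β * x ^ (β - 1)‖ ≤ |β| * (a ^ (β - 1) + b ^ (β - 1)) := by
    intro x hx
    rw [Real.norm_eq_abs, abs_mul, abs_of_nonneg (Real.rpow_nonneg (ha.le.trans hx.1) _)]
    exact mul_le_mul_of_nonneg_left (Real.rpow_le_add_rpow_of_mem_Icc ha hx _) (abs_nonneg β)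
  simpa only [Real.norm_eq_abs] using
    (convex_Icc a b).norm_image_sub_le_of_norm_hasDerivWithin_le hderiv hbound hs ht

lemma Real.one_div_rpow_eq_one_div_rpow_mul_div_rpow {x y : ℝ} (hx : 0 < x) (hy : 0 < y)
    (β : ℝ) : 1 / x ^ β = 1 / y ^ β * (y / x) ^ β := by
  have hyβ : y ^ β ≠ 0 := (Real.rpow_pos_of_pos hy β).ne'
  rw [Real.div_rpow hy.le hx.le]
  field_simp

lemma abs_div_sub_one_le_of_le {ε x y δ : ℝ} (hε : 0 < ε) (hx : ε ≤ x) (hxy : |y - x| ≤ δ) :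
    |y / x - 1| ≤ δ / ε := by
  have hx0 : 0 < x := hε.trans_le hx
  rw [div_sub_one hx0.ne', abs_div, abs_of_pos hx0]
  calc |y - x| / x ≤ |y - x| / ε := div_le_div_of_nonneg_left (abs_nonneg _) hε hx
    _ ≤ δ / ε := by gcongr

theorem stmt16_general (K A B β : ℝ) (hK : 0 < K) (hA : 0 < A) :
    ∃ M h0 : ℝ, 0 < h0 ∧ ∀ h D D' : ℝ, 0 < h → h < h0 → h < 1 →
      0 ≤ D → 0 ≤ D' → |D' - D| ≤ A * h ^ 4 → D ≤ B * h ^ 2 →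
      ∃ r : ℝ, 1 / (K * h ^ 2 + D) ^ β = (1 / (K * h ^ 2 + D') ^ β) * (1 + r) ∧
        |r| ≤ M * h ^ 2 := by
  set C := |β| * ((1 / 2 : ℝ) ^ (β - 1) + (3 / 2 : ℝ) ^ (β - 1))
  refine ⟨C * (A / K), K / (2 * A), by positivity, ?_⟩
  intro h D D' hh hh0 hh1 hD hD' hDD _
  set x := K * h ^ 2 + D
  set y := K * h ^ 2 + D'
  have hKh : 0 < K * h ^ 2 := by positivity
  have hrel : |y / x - 1| ≤ A / K * h ^ 2 := by
    have hyx : |y - x| ≤ A * h ^ 4 := by simpa only [x, y, add_sub_add_left_eq_sub] using hDD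
    calc |y / x - 1| ≤ A * h ^ 4 / (K * h ^ 2) := abs_div_sub_one_le_of_le hKh (by linarith) hyx
      _ = A / K * h ^ 2 := by field_simp
  -- `h² < h < K / (2A)` because `h < 1`
  have hsmall : A / K * h ^ 2 ≤ 1 / 2 := by
    rw [lt_div_iff₀ (by positivity)] at hh0
    rw [div_mul_eq_mul_div, div_le_iff₀ hK]
    nlinarith
  have hmem : y / x ∈ Icc (1 / 2 : ℝ) (3 / 2) := by
    have := mem_Icc_iff_abs_le.mp ((abs_sub_comm 1 (y / x)).le.trans (hrel.trans hsmall))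
    norm_num at this
    exact this
  refine ⟨(y / x) ^ β - 1, ?_, ?_⟩
  · rw [add_sub_cancel]
    exact Real.one_div_rpow_eq_one_div_rpow_mul_div_rpow (by positivity) (by positivity) β
  · have hC : 0 ≤ C := by positivity
    calc |(y / x) ^ β - 1| = |(y / x) ^ β - 1 ^ β| := by rw [Real.one_rpow]
      _ ≤ C * |y / x - 1| :=
        Real.abs_rpow_sub_rpow_le_of_mem_Icc (by norm_num) (by norm_num) hmem β
      _ ≤ C * (A / K * h ^ 2) := by gcongr
      _ = C * (A / K) * h ^ 2 := by ring

theorem stmt16 (K A B β : ℝ) (hK : 0 < K) (hA : 0 < A) (hB : 0 < B) (hβ : 0 < β) :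
    ∃ M h0 : ℝ, 0 < h0 ∧ ∀ h D D' : ℝ, 0 < h → h < h0 → h < 1 →
      0 ≤ D → 0 ≤ D' → |D' - D| ≤ A * h ^ 4 → D ≤ B * h ^ 2 →
      ∃ r : ℝ, 1 / (K * h ^ 2 + D) ^ β = (1 / (K * h ^ 2 + D') ^ β) * (1 + r) ∧
        |r| ≤ M * h ^ 2 :=
  stmt16_general K A B β hK hA
end
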